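/- Let Φ = (U, E, D, φ) be a semantic DQBF, let A be a set of arbiter variables for Φ with arbiter constraint φ_A, and let C₁, …, C_k be semantic formulas over U ⊕ E ⊕ A such that for each index i, C_i is a forcing clause for some existential literal in the formula φ ∧ φ_A ∧ ⋀_{1 ≤ j < i} C_j. Then the DQBF Q∃A(∅).(φ ∧ φ_A ∧ ⋀_{1 ≤ i ≤ k} C_i) is true if and only if Φ is true. -/
import Mathlib


attribute [local instance] Classical.propDecidable

/-- A semantic propositional formula `φ` over variables `V` depends only on the set `S`
of variables if its value agrees on any two assignments that agree on `S`. -/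
def DependsOnlyOn {V : Type*} (φ : (V → Bool) → Bool) (S : Set V) : Prop :=
  ∀ σ τ : V → Bool, (∀ v ∈ S, σ v = τ v) → φ σ = φ τ

/-- `ψ` is a definition for the variable `x` by the set `S` of variables in `φ`:
`ψ` depends only on `S` and `ψ σ = σ x` for every assignment `σ` satisfying `φ`. -/
def IsDefinition {V : Type*} (ψ : (V → Bool) → Bool) (x : V) (S : Set V)
    (φ : (V → Bool) → Bool) : Prop :=
  DependsOnlyOn ψ S ∧ ∀ σ : V → Bool, φ σ = true → ψ σ = σ x

/-- `F` is a model of the semantic DQBF with universal variables `U`, existential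
variables `E`, dependency map `D` and matrix `φ`. -/
def IsModel {U E : Type*} (D : E → Set U) (φ : (U ⊕ E → Bool) → Bool)
    (F : (U → Bool) → E → Bool) : Prop :=
  (∀ (e : E) (σ τ : U → Bool), (∀ u ∈ D e, σ u = τ u) → F σ e = F τ e) ∧
  (∀ σ : U → Bool, φ (Sum.elim σ (F σ)) = true)

/-- A semantic DQBF is true if it has a model. -/
def DQBFTrue {U E : Type*} (D : E → Set U) (φ : (U ⊕ E → Bool) → Bool) : Prop :=
  ∃ F : (U → Bool) → E → Bool, IsModel D φ F

/-- Arbiter variables: pairs `(e, σ)` of an existential variable `e` and an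
assignment `σ` of its dependency set `D e`. -/
abbrev ArbVar (U E : Type*) (D : E → Set U) := Σ e : E, (↥(D e) → Bool)

/-- A semantic formula over `U ⊕ E`, viewed as a semantic formula over `U ⊕ E ⊕ X`
(depending only on the variables in `U ⊕ E`). -/
def liftUE {U E X : Type*} (φ : (U ⊕ E → Bool) → Bool) :
    ((U ⊕ E ⊕ X) → Bool) → Bool :=
  fun μ => φ (Sum.elim (fun u => μ (Sum.inl u)) (fun e => μ (Sum.inr (Sum.inl e))))

/-- The arbiter constraint `φ_A` for a set `A` of arbiter variables: an assignment `μ`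
satisfies it iff for every `(e, σ) ∈ A`, if `μ` agrees with `σ` on `D e` then
`μ (e, σ) = μ e`. -/
noncomputable def arbConstraint {U E : Type*} (D : E → Set U)
    (A : Set (ArbVar U E D)) : ((U ⊕ E ⊕ ↥A) → Bool) → Bool :=
  fun μ => decide (∀ a : ↥A, (∀ u : ↥(D a.1.1), μ (Sum.inl u.1) = a.1.2 u) →
    μ (Sum.inr (Sum.inr a)) = μ (Sum.inr (Sum.inl a.1.1)))

/-- The embedding of `U ⊕ X` into the combined variable type `U ⊕ E ⊕ X`. -/
def embUA {U E X : Type*} : U ⊕ X → U ⊕ E ⊕ X :=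
  Sum.elim Sum.inl (fun a => Sum.inr (Sum.inr a))

/-- The existential literal `(e, b)` is forced by the partial assignment `ρ` (with
domain `dom ⊆ U ⊕ X`) in the semantic formula `ψ` over `U ⊕ E ⊕ X`: no total
assignment extending `ρ` satisfies `ψ` and falsifies the literal. -/
def Forced {U E X : Type*} (ψ : (U ⊕ E ⊕ X → Bool) → Bool)
    (dom : Set (U ⊕ X)) (ρ : U ⊕ X → Bool) (e : E) (b : Bool) : Prop :=
  ¬ ∃ μ : U ⊕ E ⊕ X → Bool,
    (∀ v ∈ dom, μ (embUA v) = ρ v) ∧ ψ μ = true ∧ μ (Sum.inr (Sum.inl e)) = !b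

/-- The domain of the restriction `p` of the partial assignment with domain `dom`
to `D e ∪ X`. -/
def pDom {U E X : Type*} (D : E → Set U) (e : E) (dom : Set (U ⊕ X)) : Set (U ⊕ X) :=
  {v ∈ dom | ∀ u : U, v = Sum.inl u → u ∈ D e}

/-- The forcing clause `¬p ∨ ℓ` for the literal `ℓ = (e, b)` forced by `ρ`: it is
satisfied by `μ` iff `μ` disagrees with `p = ρ|_{D e ∪ X}` on some variable of its
domain or `μ` satisfies `ℓ`. -/
noncomputable def forcingClause {U E X : Type*} (D : E → Set U)
    (dom : Set (U ⊕ X)) (ρ : U ⊕ X → Bool) (e : E) (b : Bool) :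
    (U ⊕ E ⊕ X → Bool) → Bool :=
  fun μ => decide ((∃ v ∈ pDom D e dom, μ (embUA v) ≠ ρ v) ∨ μ (Sum.inr (Sum.inl e)) = b)

/-- `C` is a forcing clause for some existential literal in `ψ`. -/
def IsForcingClause {U E X : Type*} (D : E → Set U)
    (ψ C : (U ⊕ E ⊕ X → Bool) → Bool) : Prop :=
  ∃ (dom : Set (U ⊕ X)) (ρ : U ⊕ X → Bool) (e : E) (b : Bool),
    Forced ψ dom ρ e b ∧ ∀ μ, C μ = forcingClause D dom ρ e b μ

theorem decideTrue {p : Prop} {inst : Decidable p} (h : p) : @decide p inst = true :=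
  @decide_eq_true p inst h

/-- Let `C 1, …, C k` be semantic formulas over `U ⊕ E ⊕ A` such that each `C i` is a
forcing clause for some existential literal in `φ ∧ φ_A ∧ ⋀_{j < i} C j`. Then the DQBF
`Q∃A(∅).(φ ∧ φ_A ∧ ⋀_{i} C i)` is true iff `Φ = (U, E, D, φ)` is true. -/
theorem true_iff_true_with_forcing_clauses {U E : Type*} [Fintype U] [Fintype E]
    (D : E → Set U) (φ : (U ⊕ E → Bool) → Bool) (A : Set (ArbVar U E D))
    (k : ℕ) (C : Fin k → (U ⊕ E ⊕ ↥A → Bool) → Bool)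
    (hforce : ∀ i : Fin k, IsForcingClause D
      (fun μ => liftUE φ μ && arbConstraint D A μ &&
        decide (∀ j : Fin k, j < i → C j μ = true))
      (C i)) :
    DQBFTrue (Sum.elim D (fun _ : ↥A => (∅ : Set U)))
        (fun μ : U ⊕ E ⊕ ↥A → Bool => liftUE φ μ && arbConstraint D A μ &&
          decide (∀ i : Fin k, C i μ = true)) ↔
      DQBFTrue D φ := by
  constructor
  · rintro ⟨F, hdep, hsat⟩
    refine ⟨fun σ e => F σ (Sum.inl e), fun e σ τ h => hdep (Sum.inl e) σ τ h, fun σ => ?_⟩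
    have h := hsat σ
    simp only [Bool.and_eq_true] at h
    exact h.1.1
  · rintro ⟨F, hdep, hsat⟩
    classical
    set E' : ↥A → U → Bool := fun a u => if h : u ∈ D a.1.1 then a.1.2 ⟨u, h⟩ else false
      with hE'
    set G : ↥A → Bool := fun a => F (E' a) a.1.1 with hG
    set μ : (U → Bool) → (U ⊕ E ⊕ ↥A → Bool) :=
      fun σ => Sum.elim σ (Sum.elim (F σ) G) with hμ
    have hlift : ∀ σ, liftUE φ (μ σ) = true := fun σ => hsat σ
    have harb : ∀ σ, arbConstraint D A (μ σ) = true := by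
      intro σ
      have h : ∀ a : ↥A, (∀ u : ↥(D a.1.1), μ σ (Sum.inl u.1) = a.1.2 u) →
          μ σ (Sum.inr (Sum.inr a)) = μ σ (Sum.inr (Sum.inl a.1.1)) := by
        intro a ha
        show G a = F σ a.1.1
        refine hdep a.1.1 (E' a) σ (fun u hu => ?_)
        show (if h : u ∈ D a.1.1 then a.1.2 ⟨u, h⟩ else false) = σ u
        rw [dif_pos hu]
        exact (ha ⟨u, hu⟩).symm
      exact decideTrue h
    have key : ∀ n : ℕ, ∀ i : Fin k, i.1 < n → ∀ σ, C i (μ σ) = true := by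
      intro n
      induction n with
      | zero => intro i hi; exact absurd hi (Nat.not_lt_zero _)
      | succ n IH =>
        intro i hi σ
        obtain ⟨dom, ρ, e, b, hFd, hCi⟩ := hforce i
        rw [hCi (μ σ)]
        unfold forcingClause
        by_cases hdis : ∃ v ∈ pDom D e dom, μ σ (embUA v) ≠ ρ v
        · exact decideTrue (Or.inl hdis)
        · push_neg at hdis
          set σ' : U → Bool := fun u => if Sum.inl u ∈ dom then ρ (Sum.inl u) else σ u
            with hσ'
          have hagree : ∀ u ∈ D e, σ' u = σ u := by
            intro u hu
            show (if Sum.inl u ∈ dom then ρ (Sum.inl u) else σ u) = σ u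
            by_cases hd : Sum.inl u ∈ dom
            · have hp : (Sum.inl u : U ⊕ ↥A) ∈ pDom D e dom :=
                ⟨hd, fun u' h => by cases h; exact hu⟩
              have h2 : σ u = ρ (Sum.inl u) := hdis _ hp
              rw [if_pos hd]
              exact h2.symm
            · rw [if_neg hd]
          have hFe : F σ' e = F σ e := hdep e σ' σ hagree
          have hext' : ∀ v ∈ dom, μ σ' (embUA v) = ρ v := by
            intro v hv
            cases v with
            | inl u =>
              show (if Sum.inl u ∈ dom then ρ (Sum.inl u) else σ u) = ρ (Sum.inl u)
              rw [if_pos hv]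
            | inr a =>
              have hp : (Sum.inr a : U ⊕ ↥A) ∈ pDom D e dom :=
                ⟨hv, fun u h => by cases h⟩
              exact hdis _ hp
          have hne : ¬ (μ σ' (Sum.inr (Sum.inl e)) = !b) := by
            intro h
            refine hFd ⟨μ σ', hext', ?_, h⟩
            simp only [Bool.and_eq_true]
            refine ⟨⟨hlift σ', harb σ'⟩, decideTrue ?_⟩
            intro j hj
            have hj' : (j : ℕ) < (i : ℕ) := hj
            exact IH j (by omega) σ'
          have hne' : F σ' e ≠ !b := hne
          have hb : F σ' e = b := by
            by_contra hq
            exact hne' (Bool.eq_not_iff.mpr hq)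
          have hgoal : μ σ (Sum.inr (Sum.inl e)) = b := by
            show F σ e = b
            rw [← hFe]
            exact hb
          exact decideTrue (Or.inr hgoal)
    refine ⟨fun σ => Sum.elim (F σ) G, fun x => ?_, fun σ => ?_⟩
    · cases x with
      | inl e => exact fun σ τ h => hdep e σ τ h
      | inr a => exact fun σ τ _ => rfl
    · show (liftUE φ (μ σ) && arbConstraint D A (μ σ) &&
        decide (∀ i : Fin k, C i (μ σ) = true)) = true
      simp only [Bool.and_eq_true]
      exact ⟨⟨hlift σ, harb σ⟩, decideTrue (fun i => key k i i.isLt σ)⟩
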